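/- arXiv:2202.12232 — 9 statements merged into one kernel-verified Lean document; each statement's English description precedes it below -/
import Mathlib

section
/- Let ε ≥ 0, let π ∈ (0,1) be the prior probability that a target point is in the training set, and let p, q > 0 be real numbers satisfying the ε-differential-privacy ratio conditions p ≤ e^ε · q and q ≤ e^ε · p (p and q represent the probabilities that the trained model lands in the adversary's acceptance set when the point is, respectively is not, in the training set). Then the posterior (positive accuracy of the membership-inference attack) satisfies π·p / (π·p + (1−π)·q) ≤ (1 + e^{−ε}·(1−π)/π)⁻¹. -/
/-!
Writing the posterior as `(1 + (1 - π) q / (π p))⁻¹`, it is antitone in the likelihood ratio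
`q / p`, and ε-DP bounds that ratio below by `e^{-ε}`.
-/

lemma div_add_eq_inv_one_add_div {a : ℝ} (b : ℝ) (ha : a ≠ 0) : a / (a + b) = (1 + b / a)⁻¹ := by
  rw [one_add_div ha, inv_div]

lemma Real.exp_neg_mul_le_of_le_exp_mul {ε p q : ℝ} (h : p ≤ Real.exp ε * q) :
    Real.exp (-ε) * p ≤ q := by
  calc Real.exp (-ε) * p ≤ Real.exp (-ε) * (Real.exp ε * q) := by gcongr
    _ = q := by rw [← mul_assoc, ← Real.exp_add, neg_add_cancel, Real.exp_zero, one_mul]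

lemma posterior_le_of_mul_le {π p q r : ℝ} (hπ0 : 0 < π) (hπ1 : π ≤ 1) (hp : 0 < p)
    (hr : 0 ≤ r) (hrq : r * p ≤ q) :
    π * p / (π * p + (1 - π) * q) ≤ (1 + r * (1 - π) / π)⁻¹ := by
  rw [div_add_eq_inv_one_add_div _ (by positivity)]
  have hratio : r * (1 - π) / π ≤ (1 - π) * q / (π * p) :=
    calc r * (1 - π) / π = (1 - π) * (r * p) / (π * p) := by field_simp
      _ ≤ (1 - π) * q / (π * p) := by gcongr
  exact inv_anti₀ (by positivity) (by gcongr)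

theorem mi_positive_accuracy_upper_bound_general
    (ε pr p q : ℝ) (hpr0 : 0 < pr) (hpr1 : pr < 1)
    (hp : 0 < p)
    (hdp1 : p ≤ Real.exp ε * q) :
    pr * p / (pr * p + (1 - pr) * q) ≤ (1 + Real.exp (-ε) * (1 - pr) / pr)⁻¹ :=
  posterior_le_of_mul_le hpr0 hpr1.le hp (Real.exp_pos _).le
    (Real.exp_neg_mul_le_of_le_exp_mul hdp1)

/-- Upper-bound half of the main theorem: under ε-DP, the positive accuracy
(posterior via Bayes' rule) of any membership-inference attack is bounded above. -/
theorem mi_positive_accuracy_upper_bound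
    (ε pr p q : ℝ) (hε : 0 ≤ ε) (hpr0 : 0 < pr) (hpr1 : pr < 1)
    (hp : 0 < p) (hq : 0 < q)
    (hdp1 : p ≤ Real.exp ε * q) (hdp2 : q ≤ Real.exp ε * p) :
    pr * p / (pr * p + (1 - pr) * q) ≤ (1 + Real.exp (-ε) * (1 - pr) / pr)⁻¹ :=
  mi_positive_accuracy_upper_bound_general ε pr p q hpr0 hpr1 hp hdp1
end

section
/- Let ε ≥ 0, let π ∈ (0,1), and let p, q > 0 be real numbers satisfying p ≤ e^ε · q and q ≤ e^ε · p. Then π·p / (π·p + (1−π)·q) ≥ (1 + e^{ε}·(1−π)/π)⁻¹. -/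
theorem inv_one_add_mul_div_eq_div (c π p : ℝ) (hπ : π ≠ 0) (hp : p ≠ 0) :
    (1 + c * (1 - π) / π)⁻¹ = π * p / (π * p + (1 - π) * (c * p)) := by
  rw [show π * p + (1 - π) * (c * p) = (π + c * (1 - π)) * p by ring, mul_div_mul_right _ _ hp,
    one_add_div hπ, inv_div, add_comm]

/-- The posterior is antitone in `q`, and at `q = c * p` the likelihood `p` cancels. -/
theorem le_bayes_posterior_of_le_mul {c π p q : ℝ} (hπ0 : 0 < π) (hπ1 : π ≤ 1)
    (hp : 0 < p) (hq : 0 ≤ q) (hqp : q ≤ c * p) :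
    (1 + c * (1 - π) / π)⁻¹ ≤ π * p / (π * p + (1 - π) * q) := by
  have h1π : 0 ≤ 1 - π := sub_nonneg.mpr hπ1
  rw [inv_one_add_mul_div_eq_div c π p hπ0.ne' hp.ne']
  gcongr

theorem mi_positive_accuracy_lower_bound_general
    (ε pr p q : ℝ) (hpr0 : 0 < pr) (hpr1 : pr < 1)
    (hp : 0 < p) (hq : 0 < q)
    (hdp2 : q ≤ Real.exp ε * p) :
    pr * p / (pr * p + (1 - pr) * q) ≥ (1 + Real.exp ε * (1 - pr) / pr)⁻¹ :=
  le_bayes_posterior_of_le_mul hpr0 hpr1.le hp hq.le hdp2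

/-- Lower-bound half of the main theorem: under ε-DP, the positive accuracy
(posterior via Bayes' rule) of any membership-inference attack is bounded below. -/
theorem mi_positive_accuracy_lower_bound
    (ε pr p q : ℝ) (hε : 0 ≤ ε) (hpr0 : 0 < pr) (hpr1 : pr < 1)
    (hp : 0 < p) (hq : 0 < q)
    (hdp1 : p ≤ Real.exp ε * q) (hdp2 : q ≤ Real.exp ε * p) :
    pr * p / (pr * p + (1 - pr) * q) ≥ (1 + Real.exp ε * (1 - pr) / pr)⁻¹ :=
  mi_positive_accuracy_lower_bound_general ε pr p q hpr0 hpr1 hp hq hdp2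
end

section
/- Let ε ≥ 0 and let p, q > 0 be real numbers satisfying p ≤ e^ε · q and q ≤ e^ε · p. Then (1 + e^{ε})⁻¹ ≤ p/(p + q) ≤ (1 + e^{−ε})⁻¹. In particular, when the sampling probability is 1/2, the overall accuracy of any membership-inference attack against an ε-DP training algorithm lies between (1 + e^{ε})⁻¹ and (1 + e^{−ε})⁻¹. -/
/-! Writing `p / (p + q) = (1 + q / p)⁻¹`, the claim says that the likelihood ratio `q / p`
lies in `[e^{-ε}, e^ε]`, which is the ε-DP condition, and that `x ↦ (1 + x)⁻¹` is antitone
on positive reals. -/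

theorem div_add_eq_inv_one_add_div_s2 {K : Type*} [DivisionRing K] {p : K} (q : K) (hp : p ≠ 0) :
    p / (p + q) = (1 + q / p)⁻¹ := by
  rw [one_add_div hp, inv_div]

theorem inv_one_add_le_inv_one_add {K : Type*} [Field K] [LinearOrder K] [IsStrictOrderedRing K]
    {x y : K} (hx : 0 < x) (hxy : x ≤ y) : (1 + y)⁻¹ ≤ (1 + x)⁻¹ :=
  inv_anti₀ (by positivity) (by gcongr)

theorem mi_accuracy_bounds_half_prior_general
    (ε p q : ℝ) (hp : 0 < p) (hq : 0 < q)
    (hdp1 : p ≤ Real.exp ε * q) (hdp2 : q ≤ Real.exp ε * p) :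
    (1 + Real.exp ε)⁻¹ ≤ p / (p + q) ∧ p / (p + q) ≤ (1 + Real.exp (-ε))⁻¹ := by
  have ratio_le : q / p ≤ Real.exp ε := (div_le_iff₀ hp).2 hdp2
  have ratio_ge : Real.exp (-ε) ≤ q / p := by
    rw [Real.exp_neg, ← inv_div]
    exact inv_anti₀ (div_pos hp hq) ((div_le_iff₀ hq).2 hdp1)
  rw [div_add_eq_inv_one_add_div_s2 q hp.ne']
  exact ⟨inv_one_add_le_inv_one_add (div_pos hq hp) ratio_le,
    inv_one_add_le_inv_one_add (Real.exp_pos _) ratio_ge⟩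

/-- Specialization to sampling probability 1/2: the overall accuracy of any
membership-inference attack against an ε-DP algorithm lies between
(1 + e^ε)⁻¹ and (1 + e^{-ε})⁻¹. -/
theorem mi_accuracy_bounds_half_prior
    (ε p q : ℝ) (hε : 0 ≤ ε) (hp : 0 < p) (hq : 0 < q)
    (hdp1 : p ≤ Real.exp ε * q) (hdp2 : q ≤ Real.exp ε * p) :
    (1 + Real.exp ε)⁻¹ ≤ p / (p + q) ∧ p / (p + q) ≤ (1 + Real.exp (-ε))⁻¹ :=
  mi_accuracy_bounds_half_prior_general ε p q hp hq hdp1 hdp2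
end

section
/- Let ε ≥ 0, π ∈ (0,1), and let p, q > 0 satisfy p ≤ e^ε·q and q ≤ e^ε·p. Then the positive membership advantage 2·(π·p/(π·p + (1−π)·q) − π) is at most 2·((1 + e^{−ε}·(1−π)/π)⁻¹ − π). -/
/-! The positive accuracy `π p / (π p + (1 - π) q)` decreases in `q`, and the ε-DP condition
`p ≤ e^ε q` says exactly that `q ≥ e^{-ε} p`; at `q = e^{-ε} p` the factor `p` cancels,
leaving `(1 + e^{-ε} (1 - π) / π)⁻¹`. -/

theorem positiveAccuracy_le_of_le {π p q r : ℝ} (hπp : 0 < π * p) (hπ : π ≤ 1)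
    (hr : 0 ≤ r) (hrq : r ≤ q) :
    π * p / (π * p + (1 - π) * q) ≤ π * p / (π * p + (1 - π) * r) := by
  have hπ' : 0 ≤ 1 - π := by linarith
  exact div_le_div_of_nonneg_left hπp.le (by positivity) (by gcongr)

theorem positiveAccuracy_mul_right (π p c : ℝ) (hπ : π ≠ 0) (hp : p ≠ 0) :
    π * p / (π * p + (1 - π) * (c * p)) = (1 + c * (1 - π) / π)⁻¹ := by
  rw [show π * p + (1 - π) * (c * p) = (π + c * (1 - π)) * p by ring, mul_div_mul_right _ _ hp,
    ← inv_div, add_div, div_self hπ]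

theorem mi_positive_advantage_bound_general
    (ε pr p q : ℝ) (hpr0 : 0 < pr) (hpr1 : pr < 1)
    (hp : 0 < p)
    (hdp1 : p ≤ Real.exp ε * q) :
    2 * (pr * p / (pr * p + (1 - pr) * q) - pr)
      ≤ 2 * ((1 + Real.exp (-ε) * (1 - pr) / pr)⁻¹ - pr) := by
  have hq : Real.exp (-ε) * p ≤ q := by
    rwa [Real.exp_neg, inv_mul_le_iff₀ (Real.exp_pos ε)]
  have hacc := positiveAccuracy_le_of_le (mul_pos hpr0 hp) hpr1.le (by positivity) hq
  rw [positiveAccuracy_mul_right pr p _ hpr0.ne' hp.ne'] at hacc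
  linarith

/-- Bound on the positive membership advantage: under ε-DP the advantage
2·(positive accuracy − π) is at most 2·((1 + e^{-ε}(1-π)/π)⁻¹ − π). -/
theorem mi_positive_advantage_bound
    (ε pr p q : ℝ) (hε : 0 ≤ ε) (hpr0 : 0 < pr) (hpr1 : pr < 1)
    (hp : 0 < p) (hq : 0 < q)
    (hdp1 : p ≤ Real.exp ε * q) (hdp2 : q ≤ Real.exp ε * p) :
    2 * (pr * p / (pr * p + (1 - pr) * q) - pr)
      ≤ 2 * ((1 + Real.exp (-ε) * (1 - pr) / pr)⁻¹ - pr) :=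
  mi_positive_advantage_bound_general ε pr p q hpr0 hpr1 hp hdp1
end

section
/- Fix ε > 0 and let h(π) = 2·((1 + e^{−ε}·(1−π)/π)⁻¹ − π) for π ∈ (0,1) be the upper bound on positive membership advantage. Then h attains its maximum over (0,1) at π* = (1 + e^{ε/2})⁻¹; that is, h(π) ≤ h((1 + e^{ε/2})⁻¹) for all π ∈ (0,1). In particular, for ε > 0 the maximizing prior π* is strictly less than 1/2. -/
/-!
Write `e^{-ε} = k⁻²` with `k = e^{ε/2} ≥ 1`. Clearing denominators,
`2(k-1)/(k+1) - h(π) = 2(k-1)(kπ - (1-π))² / ((k+1)(k²π + 1 - π))`,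
which is nonnegative for every `π > 0` and vanishes exactly at `π = (1+k)⁻¹`,
where `h` therefore attains its maximum `2(k-1)/(k+1)`.
-/

open Set

noncomputable section

/-- The bound `h` on positive membership advantage, with `a = e^{-ε}` and prior `p = π`. -/
def advantageBound (a p : ℝ) : ℝ := 2 * ((1 + a * (1 - p) / p)⁻¹ - p)

lemma advantageBound_inv_sq {k p : ℝ} (hk : k ≠ 0) (hp : p ≠ 0) :
    advantageBound (k ^ 2)⁻¹ p = 2 * (k ^ 2 * p / (k ^ 2 * p + (1 - p)) - p) := by
  rw [advantageBound]
  congr 2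
  field_simp

lemma advantageBound_inv_one_add {k : ℝ} (hk : 0 < k) :
    advantageBound (k ^ 2)⁻¹ (1 + k)⁻¹ = 2 * (k - 1) / (k + 1) := by
  rw [advantageBound_inv_sq hk.ne' (by positivity)]
  have hden : k ^ 2 * (1 + k)⁻¹ + (1 - (1 + k)⁻¹) = k := by
    field_simp
    ring
  rw [hden]
  field_simp
  ring

lemma sq_mul_add_one_sub_pos {k p : ℝ} (hk : 1 ≤ k) (hp : 0 < p) :
    0 < k ^ 2 * p + (1 - p) := by
  nlinarith [one_le_pow₀ (n := 2) hk]

lemma advantageBound_sub_eq {k p : ℝ} (hk : 1 ≤ k) (hp : 0 < p) :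
    2 * (k - 1) / (k + 1) - advantageBound (k ^ 2)⁻¹ p
      = 2 * (k - 1) * (k * p - (1 - p)) ^ 2 / ((k + 1) * (k ^ 2 * p + (1 - p))) := by
  have hden := (sq_mul_add_one_sub_pos hk hp).ne'
  rw [advantageBound_inv_sq (by positivity) hp.ne']
  field_simp
  ring

lemma advantageBound_le {k p : ℝ} (hk : 1 ≤ k) (hp : 0 < p) :
    advantageBound (k ^ 2)⁻¹ p ≤ 2 * (k - 1) / (k + 1) := by
  have hk1 : 0 ≤ k - 1 := by linarith
  have hden := sq_mul_add_one_sub_pos hk hp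
  have hgap : 0 ≤ 2 * (k - 1) * (k * p - (1 - p)) ^ 2 / ((k + 1) * (k ^ 2 * p + (1 - p))) := by
    positivity
  linarith [advantageBound_sub_eq hk hp]

theorem isMaxOn_advantageBound {k : ℝ} (hk : 1 ≤ k) :
    IsMaxOn (advantageBound (k ^ 2)⁻¹) (Ioi 0) (1 + k)⁻¹ := fun _ hp => by
  rw [mem_ofPred_eq, advantageBound_inv_one_add (by linarith)]
  exact advantageBound_le hk hp

end

/-- The upper bound on positive membership advantage, as a function of the
prior π, is maximized at π* = (1 + e^{ε/2})⁻¹, which is strictly below 1/2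
for ε > 0. -/
theorem advantage_bound_maximizer (ε : ℝ) (hε : 0 < ε) :
    (∀ pr ∈ Set.Ioo (0 : ℝ) 1,
        2 * ((1 + Real.exp (-ε) * (1 - pr) / pr)⁻¹ - pr)
          ≤ 2 * ((1 + Real.exp (-ε) * (1 - (1 + Real.exp (ε / 2))⁻¹) /
                    (1 + Real.exp (ε / 2))⁻¹)⁻¹ - (1 + Real.exp (ε / 2))⁻¹)) ∧
      (1 + Real.exp (ε / 2))⁻¹ < 1 / 2 := by
  have hk : 1 < Real.exp (ε / 2) := Real.one_lt_exp_iff.mpr (by positivity)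
  have ha : Real.exp (-ε) = (Real.exp (ε / 2) ^ 2)⁻¹ := by
    rw [← Real.exp_nat_mul, ← Real.exp_neg]
    ring_nf
  refine ⟨fun pr hpr => ?_, ?_⟩
  · rw [ha]
    exact isMaxOn_advantageBound hk.le hpr.1
  · rw [one_div, inv_lt_inv₀ (by positivity) two_pos]
    linarith
end

section
/- Let v > 0 and let m₁ > m₂ be real numbers. Let μ₁ = gaussianReal m₁ v and μ₂ = gaussianReal m₂ v be the Gaussian measures with means m₁ and m₂ and variance v. Then the function α ↦ μ₂((−∞, α]) / (μ₁((−∞, α]) + μ₂((−∞, α])) (with the measures evaluated as real numbers) tends to 1 as α → −∞. -/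
/-!
The likelihood ratio of `N(m₁, v)` to `N(m₂, v)` at `x` is
`exp ((m₁ - m₂) / v * (x - (m₁ + m₂) / 2))`, increasing in `x` when `m₂ ≤ m₁`. Integrating
over `(-∞, α]` therefore gives `Φ₁(α) ≤ exp ((m₁ - m₂) / v * (α - (m₁ + m₂) / 2)) * Φ₂(α)`,
so `Φ₁(α) / Φ₂(α) → 0` as `α → -∞`, and `Φ₂ / (Φ₁ + Φ₂) = (Φ₁ / Φ₂ + 1)⁻¹ → 1`.
-/

open ProbabilityTheory MeasureTheory Filter Topology Real

lemma tendsto_div_add_of_tendsto_div_zero {ι : Type*} {l : Filter ι} {f g : ι → ℝ}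
    (hg : ∀ᶠ i in l, g i ≠ 0) (h : Tendsto (fun i => f i / g i) l (𝓝 0)) :
    Tendsto (fun i => g i / (f i + g i)) l (𝓝 1) := by
  have hinv : Tendsto (fun i => (f i / g i + 1)⁻¹) l (𝓝 1) := by
    simpa using (h.add_const 1).inv₀ (by norm_num)
  refine hinv.congr' ?_
  filter_upwards [hg] with i hi
  rw [div_add_one hi, inv_div]

namespace ProbabilityTheory

lemma gaussianPDFReal_eq_exp_mul (m₁ m₂ : ℝ) (v : NNReal) (x : ℝ) :
    gaussianPDFReal m₁ v x =
      exp ((m₁ - m₂) / v * (x - (m₁ + m₂) / 2)) * gaussianPDFReal m₂ v x := by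
  simp only [gaussianPDFReal]
  rw [mul_left_comm, ← exp_add]
  congr 2
  ring

lemma gaussianReal_Iic_toReal_pos (m : ℝ) {v : NNReal} (hv : v ≠ 0) (α : ℝ) :
    0 < (gaussianReal m v (Set.Iic α)).toReal := by
  refine ENNReal.toReal_pos (fun h => ?_) (measure_ne_top _ _)
  simpa [Real.volume_Iic] using gaussianReal_absolutelyContinuous' m hv h

lemma gaussianReal_Iic_toReal_eq_integral (m : ℝ) {v : NNReal} (hv : v ≠ 0) (α : ℝ) :
    (gaussianReal m v (Set.Iic α)).toReal = ∫ x in Set.Iic α, gaussianPDFReal m v x := by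
  rw [gaussianReal_apply_eq_integral m hv, ENNReal.toReal_ofReal]
  exact setIntegral_nonneg measurableSet_Iic fun x _ => gaussianPDFReal_nonneg m v x

lemma gaussianReal_Iic_toReal_le_exp_mul {m₁ m₂ : ℝ} (hm : m₂ ≤ m₁) {v : NNReal} (hv : v ≠ 0)
    (α : ℝ) :
    (gaussianReal m₁ v (Set.Iic α)).toReal ≤
      exp ((m₁ - m₂) / v * (α - (m₁ + m₂) / 2)) * (gaussianReal m₂ v (Set.Iic α)).toReal := by
  rw [gaussianReal_Iic_toReal_eq_integral m₁ hv, gaussianReal_Iic_toReal_eq_integral m₂ hv,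
    ← integral_const_mul]
  refine setIntegral_mono_on (integrable_gaussianPDFReal m₁ v).restrict
    ((integrable_gaussianPDFReal m₂ v).const_mul _).restrict measurableSet_Iic fun x hx => ?_
  rw [gaussianPDFReal_eq_exp_mul m₁ m₂]
  have hslope : 0 ≤ (m₁ - m₂) / v := div_nonneg (sub_nonneg.mpr hm) v.coe_nonneg
  gcongr
  · exact gaussianPDFReal_nonneg m₂ v x
  · exact hx

lemma tendsto_gaussianReal_Iic_div_atBot {m₁ m₂ : ℝ} (hm : m₂ < m₁) {v : NNReal} (hv : v ≠ 0) :
    Tendsto (fun α => (gaussianReal m₁ v (Set.Iic α)).toReal /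
      (gaussianReal m₂ v (Set.Iic α)).toReal) atBot (𝓝 0) := by
  have hslope : 0 < (m₁ - m₂) / v :=
    div_pos (sub_pos.mpr hm) (NNReal.coe_pos.mpr (pos_iff_ne_zero.mpr hv))
  have hexponent : Tendsto (fun α : ℝ => (m₁ - m₂) / v * (α - (m₁ + m₂) / 2)) atBot atBot := by
    refine Tendsto.const_mul_atBot hslope ?_
    simpa [sub_eq_add_neg] using tendsto_atBot_add_const_right _ (-((m₁ + m₂) / 2)) tendsto_id
  refine tendsto_of_tendsto_of_tendsto_of_le_of_le tendsto_const_nhds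
    (tendsto_exp_atBot.comp hexponent) (fun α => div_nonneg ENNReal.toReal_nonneg
      ENNReal.toReal_nonneg) fun α => ?_
  rw [Function.comp_apply, div_le_iff₀ (gaussianReal_Iic_toReal_pos m₂ hv α)]
  exact gaussianReal_Iic_toReal_le_exp_mul hm.le hv α

end ProbabilityTheory

/-- As the threshold α → −∞, the positive accuracy of the Gaussian
thresholding attack, Φ₂(α)/(Φ₁(α)+Φ₂(α)) with means m₁ > m₂ and common
variance v, tends to 1. -/
theorem gaussian_threshold_pos_acc_tendsto_one
    (v : NNReal) (hv : 0 < v) (m₁ m₂ : ℝ) (hm : m₁ > m₂) :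
    Tendsto
      (fun α : ℝ =>
        ((gaussianReal m₂ v) (Set.Iic α)).toReal /
          (((gaussianReal m₁ v) (Set.Iic α)).toReal +
            ((gaussianReal m₂ v) (Set.Iic α)).toReal))
      atBot (nhds 1) :=
  tendsto_div_add_of_tendsto_div_zero
    (Eventually.of_forall fun α => (gaussianReal_Iic_toReal_pos m₂ hv.ne' α).ne')
    (tendsto_gaussianReal_Iic_div_atBot hm hv.ne')
end

section
/- Let v > 0 and m₁ > m₂, let μ₁ = gaussianReal m₁ v and μ₂ = gaussianReal m₂ v, and define g(α) = μ₂((−∞, α]) / (μ₁((−∞, α]) + μ₂((−∞, α])) (measures evaluated as real numbers). Then for every m ∈ [0, 1) there exists a threshold α ∈ ℝ such that g(α) > m. In other words, the positive accuracy of the Gaussian thresholding membership-inference attack is not bounded away from 1. -/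
/-!
The likelihood ratio of `N(m₁, v)` to `N(m₂, v)` at `x` is
`exp ((m₁ - m₂) / v * (x - (m₁ + m₂) / 2))`, which tends to `0` as `x → -∞` when `m₂ < m₁`.
Integrating over `(-∞, α]`, the CDF of `N(m₁, v)` is little-o of that of `N(m₂, v)` at `-∞`,
so `g(α) = 1 / (1 + F₁(α) / F₂(α))` tends to `1`.
-/

open ProbabilityTheory MeasureTheory Filter Asymptotics Real Set Topology

lemma gaussianPDFReal_eq_exp_mul_gaussianPDFReal (m₁ m₂ : ℝ) (v : NNReal) (x : ℝ) :
    gaussianPDFReal m₁ v x =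
      exp ((m₁ - m₂) / v * (x - (m₁ + m₂) / 2)) * gaussianPDFReal m₂ v x := by
  simp only [gaussianPDFReal, mul_left_comm _ (√(2 * π * v))⁻¹, ← exp_add]
  ring_nf

lemma gaussianPDFReal_isLittleO_atBot {m₁ m₂ : ℝ} (hm : m₂ < m₁) {v : NNReal} (hv : 0 < v) :
    gaussianPDFReal m₁ v =o[atBot] gaussianPDFReal m₂ v := by
  have hratio : Tendsto (fun x ↦ exp ((m₁ - m₂) / v * (x - (m₁ + m₂) / 2))) atBot (𝓝 0) :=
    tendsto_exp_atBot.comp <| (tendsto_atBot_add_const_right _ _ tendsto_id).const_mul_atBot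
      (div_pos (sub_pos.mpr hm) hv)
  simpa only [one_mul, ← gaussianPDFReal_eq_exp_mul_gaussianPDFReal] using
    ((isLittleO_one_iff ℝ).mpr hratio).mul_isBigO (isBigO_refl (gaussianPDFReal m₂ v) atBot)

theorem Asymptotics.IsLittleO.setIntegral_Iic_atBot {E : Type*} [NormedAddCommGroup E]
    [NormedSpace ℝ E] {f : ℝ → E} {g : ℝ → ℝ} (hfg : f =o[atBot] g) (hg : Integrable g)
    (hg0 : 0 ≤ g) :
    (fun a ↦ ∫ x in Iic a, f x) =o[atBot] fun a ↦ ∫ x in Iic a, g x := by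
  refine IsLittleO.of_bound fun c hc ↦ ?_
  obtain ⟨b, hb⟩ := eventually_atBot.mp (hfg.bound hc)
  filter_upwards [eventually_le_atBot b] with a hab
  have hgc : ∀ x ∈ Iic a, ‖f x‖ ≤ c * g x := fun x hx ↦ by
    simpa [abs_of_nonneg (hg0 x)] using hb x (le_trans hx hab)
  calc ‖∫ x in Iic a, f x‖ ≤ ∫ x in Iic a, c * g x :=
        norm_integral_le_of_norm_le (hg.restrict.const_mul c)
          ((ae_restrict_iff' measurableSet_Iic).mpr (ae_of_all _ hgc))
    _ = c * ‖∫ x in Iic a, g x‖ := by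
        rw [integral_const_mul, Real.norm_of_nonneg (setIntegral_nonneg measurableSet_Iic
          fun x _ ↦ hg0 x)]

lemma gaussianReal_real_eq_setIntegral (m : ℝ) {v : NNReal} (hv : v ≠ 0) (s : Set ℝ) :
    (gaussianReal m v).real s = ∫ x in s, gaussianPDFReal m v x := by
  rw [measureReal_def, gaussianReal_apply_eq_integral m hv, ENNReal.toReal_ofReal
    (setIntegral_nonneg_of_ae (ae_of_all _ (gaussianPDFReal_nonneg m v)))]

lemma gaussianReal_real_Iic_pos (m : ℝ) {v : NNReal} (hv : v ≠ 0) (a : ℝ) :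
    0 < (gaussianReal m v).real (Iic a) := by
  refine ENNReal.toReal_pos ?_ (measure_ne_top _ _)
  exact fun h ↦ by simpa using gaussianReal_absolutelyContinuous' m hv h

/-- The positive accuracy of the Gaussian thresholding attack is not bounded
away from 1: for every m ∈ [0,1) some threshold achieves accuracy > m. -/
theorem gaussian_threshold_pos_acc_unbounded
    (v : NNReal) (hv : 0 < v) (m₁ m₂ : ℝ) (hm : m₁ > m₂) :
    ∀ m ∈ Set.Ico (0 : ℝ) 1, ∃ α : ℝ,
      ((gaussianReal m₂ v) (Set.Iic α)).toReal /
          (((gaussianReal m₁ v) (Set.Iic α)).toReal +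
            ((gaussianReal m₂ v) (Set.Iic α)).toReal) > m := by
  rintro m ⟨hm0, hm1⟩
  have hcdf : (fun a ↦ (gaussianReal m₁ v).real (Iic a)) =o[atBot]
      fun a ↦ (gaussianReal m₂ v).real (Iic a) := by
    simp only [gaussianReal_real_eq_setIntegral _ hv.ne']
    exact (gaussianPDFReal_isLittleO_atBot hm hv).setIntegral_Iic_atBot
      (integrable_gaussianPDFReal m₂ v) (gaussianPDFReal_nonneg m₂ v)
  obtain ⟨α, hα⟩ := (hcdf.bound (sub_pos.mpr hm1)).exists
  refine ⟨α, ?_⟩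
  simp only [← measureReal_def]
  set A := (gaussianReal m₁ v).real (Iic α)
  set B := (gaussianReal m₂ v).real (Iic α)
  have hA : 0 ≤ A := measureReal_nonneg
  have hB : 0 < B := gaussianReal_real_Iic_pos m₂ hv.ne' α
  rw [Real.norm_of_nonneg hA, Real.norm_of_nonneg hB.le] at hα
  rw [gt_iff_lt, lt_div_iff₀ (by positivity)]
  -- m A ≤ m (1 - m) B < (1 - m) B
  nlinarith [mul_le_mul_of_nonneg_left hα hm0, mul_pos (sub_pos.mpr hm1) hB]
end

section
/- Let v > 0, c > 0, and m ∈ ℝ. Let μ₁ = gaussianReal m v and μ₂ = gaussianReal (m − c) v. Then for every α ∈ ℝ, (1 − μ₁((−∞, α]))/2 + μ₂((−∞, α])/2 ≤ (gaussianReal 0 v)((−∞, c/2]) (with all measures evaluated as real numbers), with equality when α = m − c/2. -/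
/-!
Writing `Φ` for the distribution function of `N(0, v)`, the accuracy at threshold `α` is
`(1 + Φ(a + c) - Φ(a)) / 2` with `a = α - m`, i.e. one half plus half the `N(0, v)`-mass of an
interval of length `c`. Since the Gaussian density is even and decreasing in `|x|`, an interval of
given length carries the most mass when centred at `0`; for `[-c/2, c/2]` the symmetry
`Φ(-x) = 1 - Φ(x)` turns the accuracy into `Φ(c/2)`.
-/

open ProbabilityTheory MeasureTheory Set

section SymmetricDecreasing

variable {g : ℝ → ℝ}

lemma integral_centered_le_integral_centered_zero_of_nonneg
    (hg : ∀ x y, |x| ≤ |y| → g y ≤ g x) (hint : ∀ a b, IntervalIntegrable g volume a b)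
    {h t : ℝ} (hh : 0 ≤ h) (ht : 0 ≤ t) :
    ∫ x in (t - h)..(t + h), g x ≤ ∫ x in (-h)..h, g x := by
  rw [← sub_nonpos, intervalIntegral.integral_interval_sub_interval_comm' (hint _ _) (hint _ _)
    (hint _ _), sub_nonpos]
  -- Translating `[-h, t - h]` by `2h` moves every point away from `0`.
  have hshift : ∫ x in h..(t + h), g x = ∫ x in (-h)..(t - h), g (x + 2 * h) := by
    rw [intervalIntegral.integral_comp_add_right]
    ring_nf
  rw [hshift]
  refine intervalIntegral.integral_mono_on (by linarith) ?_ (hint _ _) fun x hx => ?_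
  · simpa using (hint (-h + 2 * h) (t - h + 2 * h)).comp_add_right (2 * h)
  · exact hg _ _ (abs_le_abs (by linarith) (by linarith [hx.1]))

lemma integral_centered_le_integral_centered_zero
    (hg : ∀ x y, |x| ≤ |y| → g y ≤ g x) (hint : ∀ a b, IntervalIntegrable g volume a b)
    {h : ℝ} (hh : 0 ≤ h) (t : ℝ) :
    ∫ x in (t - h)..(t + h), g x ≤ ∫ x in (-h)..h, g x := by
  rcases le_or_gt 0 t with ht | ht
  · exact integral_centered_le_integral_centered_zero_of_nonneg hg hint hh ht
  · have heven : ∀ x, g (-x) = g x := fun x =>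
      le_antisymm (hg _ _ (abs_neg x).ge) (hg _ _ (abs_neg x).le)
    have hreflect : ∫ x in (t - h)..(t + h), g x = ∫ x in (-t - h)..(-t + h), g x := by
      rw [show -t - h = -(t + h) by ring, show -t + h = -(t - h) by ring,
        ← intervalIntegral.integral_comp_neg]
      simp only [heven]
    rw [hreflect]
    exact integral_centered_le_integral_centered_zero_of_nonneg hg hint hh (by linarith)

end SymmetricDecreasing

lemma real_Iic_neg_add_real_Iic {μ : Measure ℝ} [IsProbabilityMeasure μ] [NullSingletonClass μ]
    (hμ : μ.map (fun x => -x) = μ) (b : ℝ) : μ.real (Iic (-b)) + μ.real (Iic b) = 1 := by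
  have hneg : μ.real (Iic (-b)) = μ.real (Iio b)ᶜ :=
    calc μ.real (Iic (-b)) = (μ.map (fun x => -x)).real (Iic (-b)) := by rw [hμ]
      _ = μ.real (Iio b)ᶜ := by
        rw [map_measureReal_apply measurable_neg measurableSet_Iic, compl_Iio]
        congr 1
        ext x
        simp
  rw [hneg, ← measureReal_congr (Iio_ae_eq_Iic (μ := μ)), add_comm]
  exact probReal_add_probReal_compl measurableSet_Iio

namespace ProbabilityTheory

variable {v : NNReal}

lemma gaussianPDFReal_zero_le_of_abs_le {x y : ℝ} (hxy : |x| ≤ |y|) :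
    gaussianPDFReal 0 v y ≤ gaussianPDFReal 0 v x := by
  simp only [gaussianPDFReal, sub_zero]
  gcongr _ * Real.exp (-?_ / _)
  exact sq_le_sq.mpr hxy

lemma gaussianReal_real_Iic (μ : ℝ) (v : NNReal) (b : ℝ) :
    (gaussianReal μ v).real (Iic b) = (gaussianReal 0 v).real (Iic (b - μ)) := by
  rw [← zero_add μ, ← gaussianReal_map_add_const,
    map_measureReal_apply (measurable_add_const μ) measurableSet_Iic, zero_add]
  congr 1
  ext x
  simp [le_sub_iff_add_le]

lemma gaussianReal_zero_real_Iic_neg_add (hv : v ≠ 0) (b : ℝ) :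
    (gaussianReal 0 v).real (Iic (-b)) + (gaussianReal 0 v).real (Iic b) = 1 := by
  have := nullSingletonClass_gaussianReal (μ := 0) hv
  exact real_Iic_neg_add_real_Iic (by simpa using gaussianReal_map_neg (μ := 0) (v := v)) b

lemma gaussianReal_zero_real_Iic_sub (hv : v ≠ 0) (a b : ℝ) :
    (gaussianReal 0 v).real (Iic b) - (gaussianReal 0 v).real (Iic a) =
      ∫ x in a..b, gaussianPDFReal 0 v x := by
  have hcdf : ∀ b, (gaussianReal 0 v).real (Iic b) = ∫ x in Iic b, gaussianPDFReal 0 v x :=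
    fun b => by
      rw [measureReal_def, gaussianReal_apply_eq_integral 0 hv, ENNReal.toReal_ofReal
        (setIntegral_nonneg measurableSet_Iic fun x _ => gaussianPDFReal_nonneg 0 v x)]
  have hint := integrable_gaussianPDFReal 0 v
  rw [hcdf, hcdf, intervalIntegral.integral_Iic_sub_Iic hint.integrableOn hint.integrableOn]

lemma gaussianReal_zero_real_Iic_add_sub_le (hv : v ≠ 0) {c : ℝ} (hc : 0 ≤ c) (a : ℝ) :
    (gaussianReal 0 v).real (Iic (a + c)) - (gaussianReal 0 v).real (Iic a) ≤
      (gaussianReal 0 v).real (Iic (c / 2)) - (gaussianReal 0 v).real (Iic (-(c / 2))) := by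
  have hcentre := integral_centered_le_integral_centered_zero
    (fun x y => gaussianPDFReal_zero_le_of_abs_le (v := v))
    (fun a b => (integrable_gaussianPDFReal 0 v).intervalIntegrable) (by linarith : 0 ≤ c / 2)
    (a + c / 2)
  rw [gaussianReal_zero_real_Iic_sub hv, gaussianReal_zero_real_Iic_sub hv]
  convert hcentre using 2 <;> ring

end ProbabilityTheory

/-- The overall accuracy of the Gaussian thresholding attack,
(1 − Φ₁(α))/2 + Φ₂(α)/2 with means m and m − c, is maximized at the midpoint
threshold α = m − c/2, where it equals the standard Gaussian mass of
(−∞, c/2]. -/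
theorem gaussian_threshold_accuracy_max
    (v : NNReal) (hv : 0 < v) (c m : ℝ) (hc : 0 < c) :
    (∀ α : ℝ,
        (1 - ((gaussianReal m v) (Set.Iic α)).toReal) / 2 +
            ((gaussianReal (m - c) v) (Set.Iic α)).toReal / 2
          ≤ ((gaussianReal 0 v) (Set.Iic (c / 2))).toReal) ∧
      (1 - ((gaussianReal m v) (Set.Iic (m - c / 2))).toReal) / 2 +
          ((gaussianReal (m - c) v) (Set.Iic (m - c / 2))).toReal / 2
        = ((gaussianReal 0 v) (Set.Iic (c / 2))).toReal := by
  simp only [← measureReal_def]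
  have hsymm := gaussianReal_zero_real_Iic_neg_add hv.ne' (c / 2)
  refine ⟨fun α => ?_, ?_⟩
  · have hmass := gaussianReal_zero_real_Iic_add_sub_le hv.ne' hc.le (α - m)
    rw [gaussianReal_real_Iic m, gaussianReal_real_Iic (m - c),
      show α - (m - c) = α - m + c by ring]
    linarith
  · rw [gaussianReal_real_Iic m, gaussianReal_real_Iic (m - c),
      show m - c / 2 - m = -(c / 2) by ring, show m - c / 2 - (m - c) = c / 2 by ring]
    linarith
end

section
/- For every real ε ≥ 0, the paper's accuracy upper bound satisfies the chain (1 + e^{−ε})⁻¹ ≤ min(1/2 + ε/4, 1 − e^{−ε}/2), and both inequalities are strict for ε > 0. -/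
/-!
Writing `t = exp (-ε)`, the comparison with `1 - t / 2` reduces to `t ^ 2 ≤ t`, i.e. `t ≤ 1`.
For the comparison with `1 / 2 + ε / 4`, the bound is the logistic function
`(1 + exp (-ε))⁻¹ = 1 / 2 + tanh (ε / 2) / 2`, so it reduces to `tanh x ≤ x` for `x ≥ 0`,
which holds because `x cosh x - sinh x` has derivative `x sinh x ≥ 0`.
-/

open Real Set

namespace Real

theorem strictMonoOn_mul_cosh_sub_sinh : StrictMonoOn (fun x => x * cosh x - sinh x) (Ici 0) := by
  refine strictMonoOn_of_deriv_pos (convex_Ici 0) (by fun_prop) fun x hx => ?_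
  rw [interior_Ici, mem_Ioi] at hx
  have hderiv : HasDerivAt (fun x => x * cosh x - sinh x) (1 * cosh x + x * sinh x - cosh x) x :=
    ((hasDerivAt_id' x).mul (hasDerivAt_cosh x)).sub (hasDerivAt_sinh x)
  rw [hderiv.deriv, one_mul, add_sub_cancel_left]
  exact mul_pos hx (sinh_pos_iff.2 hx)

theorem tanh_lt_self {x : ℝ} (hx : 0 < x) : tanh x < x := by
  have hmono := strictMonoOn_mul_cosh_sub_sinh (mem_Ici.2 le_rfl) (mem_Ici.2 hx.le) hx
  simp only [zero_mul, sinh_zero, sub_zero, sub_pos] at hmono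
  rw [tanh_eq_sinh_div_cosh, div_lt_iff₀ (cosh_pos x)]
  linarith

theorem tanh_le_self {x : ℝ} (hx : 0 ≤ x) : tanh x ≤ x := by
  rcases hx.eq_or_lt with rfl | hx
  · simp
  · exact (tanh_lt_self hx).le

theorem inv_one_add_exp_neg (x : ℝ) : (1 + exp (-x))⁻¹ = 1 / 2 + tanh (x / 2) / 2 := by
  have hexp : exp (-x) = exp (-(x / 2)) ^ 2 := by rw [← exp_nat_mul]; ring_nf
  rw [tanh_eq_sinh_div_cosh, sinh_eq, cosh_eq, hexp, exp_neg]
  field_simp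
  ring

end Real

theorem inv_one_add_le_one_sub_half {t : ℝ} (h0 : 0 ≤ t) (h1 : t ≤ 1) : (1 + t)⁻¹ ≤ 1 - t / 2 := by
  rw [inv_le_iff_one_le_mul₀ (by linarith)]
  nlinarith

theorem inv_one_add_lt_one_sub_half {t : ℝ} (h0 : 0 < t) (h1 : t < 1) : (1 + t)⁻¹ < 1 - t / 2 := by
  rw [inv_lt_iff_one_lt_mul₀ (by linarith)]
  nlinarith

/-- The paper's accuracy bound is at most the minimum of the two previous
bounds, strictly so for ε > 0. -/
theorem paper_bound_tighter (ε : ℝ) (hε : 0 ≤ ε) :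
    (1 + Real.exp (-ε))⁻¹ ≤ min (1 / 2 + ε / 4) (1 - Real.exp (-ε) / 2) ∧
      (0 < ε → (1 + Real.exp (-ε))⁻¹ < min (1 / 2 + ε / 4) (1 - Real.exp (-ε) / 2)) := by
  have hexp_pos : 0 < exp (-ε) := exp_pos _
  refine ⟨le_min ?_ ?_, fun hε_pos => lt_min ?_ ?_⟩
  · rw [inv_one_add_exp_neg]
    linarith [tanh_le_self (by positivity : 0 ≤ ε / 2)]
  · exact inv_one_add_le_one_sub_half hexp_pos.le (exp_le_one_iff.2 (neg_nonpos.2 hε))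
  · rw [inv_one_add_exp_neg]
    linarith [tanh_lt_self (half_pos hε_pos)]
  · exact inv_one_add_lt_one_sub_half hexp_pos (exp_lt_one_iff.2 (neg_neg_of_pos hε_pos))
end
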